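/- If a regret function D_F based on a convex continuous function F on a finite-dimensional convex state space is monotone under all affine self-maps, then F is differentiable (hence D_F is a Bregman divergence). In particular, along every segment the restriction f(t) = F((1-t)s₀ + t s₁) has continuous right derivative, i.e. f is differentiable on (0,1). -/

import Mathlib

/-!
Along a segment, `f t = F ((1 - t) • s₀ + t • s₁)` is convex, so at every interior point `c` it
has one-sided derivatives `f'₋(c) ≤ f'₊(c)`. Monotonicity under the dilations
`Φ_r = homothety s₀ r` says that `f (r t) - f (r c) - f'₊(r c) (r t - r c)` never exceeds its value
at `r = 1`. For `r < 1` we have `f'₊(r c) ≤ f'₋(c)`, so letting `r → 1⁻` gives `f'₊(c) ≤ f'₋(c)`: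
the right derivative cannot jump, and `f` is differentiable at `c`.

A convex function on a finite-dimensional space with two-sided directional derivatives along a
basis is Fréchet differentiable: after subtracting the candidate linear map, Jensen's inequality
bounds the remainder at `v` from above by its values on the coordinate axes, and convexity at the
midpoint of `v` and `-v` bounds it from below.
-/

open Set Filter Topology Asymptotics AffineMap

noncomputable def rightRegret (f : ℝ → ℝ) (a b : ℝ) : ℝ :=
  f b - f a - derivWithin f (Ioi a) a * (b - a)

namespace ConvexOn

variable {S : Set ℝ} {f : ℝ → ℝ} {c t : ℝ}

theorem rightDeriv_le_leftDeriv_of_rightRegret_le (hf : ConvexOn ℝ S f) (hc : c ∈ interior S)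
    (ht : t ∈ interior S) (hc₀ : 0 < c) (hct : c < t)
    (hreg : ∀ᶠ r in 𝓝[<] 1, rightRegret f (r * c) (r * t) ≤ rightRegret f c t) :
    derivWithin f (Ioi c) c ≤ derivWithin f (Iio c) c := by
  set D := derivWithin f (Iio c) c
  have hrc : ∀ᶠ r in 𝓝[<] (1 : ℝ), r * c ∈ interior S := by
    have : Tendsto (fun r : ℝ => r * c) (𝓝[<] 1) (𝓝 c) := by
      simpa using ((continuous_mul_const c).tendsto 1).mono_left nhdsWithin_le_nhds
    exact this.eventually (isOpen_interior.mem_nhds hc)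
  have hbound : ∀ᶠ r in 𝓝[<] (1 : ℝ),
      f (r * t) - f (r * c) - D * (r * t - r * c) ≤ rightRegret f c t := by
    filter_upwards [hreg, hrc, Ioo_mem_nhdsLT one_pos] with r hr hrcS ⟨hr₀, hr₁⟩
    have hlt : r * c < c := mul_lt_of_lt_one_left hc₀ hr₁
    have hder : derivWithin f (Ioi (r * c)) (r * c) ≤ D :=
      (hf.rightDeriv_le_slope_of_mem_interior hrcS (interior_subset hc) hlt).trans
        (hf.slope_le_leftDeriv_of_mem_interior (interior_subset hrcS) hc hlt)
    have hgap : 0 ≤ r * t - r * c := sub_nonneg.2 (mul_le_mul_of_nonneg_left hct.le hr₀.le)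
    exact (sub_le_sub_left (mul_le_mul_of_nonneg_right hder hgap) _).trans hr
  have hcont : ∀ y ∈ interior S, ContinuousAt (fun r : ℝ => f (r * y)) 1 := fun y hy =>
    (hf.continuousOn_interior.continuousAt (isOpen_interior.mem_nhds hy)).comp_of_eq
      (continuous_mul_const y).continuousAt (one_mul y)
  have hlim : Tendsto (fun r : ℝ => f (r * t) - f (r * c) - D * (r * t - r * c)) (𝓝[<] 1)
      (𝓝 (f t - f c - D * (t - c))) := by
    have hg : ContinuousAt (fun r : ℝ => f (r * t) - f (r * c) - D * (r * t - r * c)) 1 :=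
      ((hcont t ht).sub (hcont c hc)).sub (by fun_prop)
    simpa using hg.tendsto.mono_left nhdsWithin_le_nhds
  have hlimit := le_of_tendsto hlim hbound
  unfold rightRegret at hlimit
  exact le_of_mul_le_mul_right (by linarith) (sub_pos.2 hct)

theorem hasDerivAt_of_rightRegret_le (hf : ConvexOn ℝ S f) (hc : c ∈ interior S)
    (ht : t ∈ interior S) (hc₀ : 0 < c) (hct : c < t)
    (hreg : ∀ᶠ r in 𝓝[<] 1, rightRegret f (r * c) (r * t) ≤ rightRegret f c t) :
    HasDerivAt f (derivWithin f (Ioi c) c) c := by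
  have heq : derivWithin f (Iio c) c = derivWithin f (Ioi c) c :=
    (hf.leftDeriv_le_rightDeriv_of_mem_interior hc).antisymm
      (hf.rightDeriv_le_leftDeriv_of_rightRegret_le hc ht hc₀ hct hreg)
  have hleft := hf.hasDerivWithinAt_leftDeriv_of_mem_interior hc
  rw [heq] at hleft
  exact hasDerivAt_iff_tendsto_slope_left_right.2
    ⟨(hasDerivWithinAt_iff_tendsto_slope' self_notMem_Iio).1 hleft,
      (hasDerivWithinAt_iff_tendsto_slope' self_notMem_Ioi).1
        (hf.hasDerivWithinAt_rightDeriv_of_mem_interior hc)⟩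

end ConvexOn

section

variable {V : Type*} [NormedAddCommGroup V] [NormedSpace ℝ V]

/-- The paper's `D_F(s₁, s₀) = f(1) - f(0) - f'₊(0)` for `f t = F ((1 - t) • s₀ + t • s₁)`: the
derivative within `[0, 1]` at `0` is the right derivative (and `0` when `f` has none). -/
noncomputable def regret (F : V → ℝ) (s₁ s₀ : V) : ℝ :=
  F ((1 - (1:ℝ)) • s₀ + (1:ℝ) • s₁) - F ((1 - (0:ℝ)) • s₀ + (0:ℝ) • s₁)
    - derivWithin (fun t : ℝ => F ((1 - t) • s₀ + t • s₁)) (Icc 0 1) 0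

def RegretMonotoneOn (S : Set V) (F : V → ℝ) : Prop :=
  ∀ Φ : V →ᵃ[ℝ] V, MapsTo Φ S S → ∀ s₁ ∈ S, ∀ s₀ ∈ S, regret F (Φ s₁) (Φ s₀) ≤ regret F s₁ s₀

theorem regret_eq (F : V → ℝ) (s₁ s₀ : V) :
    regret F s₁ s₀ = F s₁ - F s₀ - derivWithin (fun t : ℝ => F (lineMap s₀ s₁ t)) (Icc 0 1) 0 := by
  have hf : (fun t : ℝ => F ((1 - t) • s₀ + t • s₁)) = fun t : ℝ => F (lineMap s₀ s₁ t) :=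
    funext fun t => by simp [lineMap_apply_module]
  simp [regret, hf]

theorem regret_lineMap (F : V → ℝ) (s₀ s₁ : V) {a b : ℝ} (hab : a ≤ b)
    (hd : DifferentiableWithinAt ℝ (fun t : ℝ => F (lineMap s₀ s₁ t)) (Ioi a) a) :
    regret F (lineMap s₀ s₁ b) (lineMap s₀ s₁ a) =
      rightRegret (fun t : ℝ => F (lineMap s₀ s₁ t)) a b := by
  set f := fun t : ℝ => F (lineMap s₀ s₁ t)
  have hcomp : (fun u : ℝ => F (lineMap (lineMap s₀ s₁ a) (lineMap s₀ s₁ b) u)) =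
      fun u : ℝ => f (lineMap a b u) :=
    funext fun u => by simp [f, apply_lineMap]
  have hmaps : MapsTo (lineMap (k := ℝ) a b) (Icc 0 1) (Ici a) := fun u hu => by
    simp only [mem_Ici, lineMap_apply_ring']
    nlinarith [hu.1]
  have hderiv : HasDerivWithinAt (fun u : ℝ => f (lineMap a b u))
      (derivWithin f (Ioi a) a * (b - a)) (Icc 0 1) 0 :=
    hd.hasDerivWithinAt.Ici_of_Ioi.comp_of_eq 0 hasDerivWithinAt_lineMap hmaps
      (lineMap_apply_zero a b).symm
  rw [regret_eq, hcomp, hderiv.derivWithin (uniqueDiffOn_Icc zero_lt_one 0 ⟨le_rfl, zero_le_one⟩)]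
  rfl

theorem homothety_lineMap (s₀ s₁ : V) (r a : ℝ) :
    homothety s₀ r (lineMap s₀ s₁ a) = lineMap s₀ s₁ (r * a) := by
  rw [homothety_eq_lineMap, lineMap_lineMap_right]

theorem RegretMonotoneOn.differentiableAt_lineMap {S : Set V} {F : V → ℝ}
    (hmono : RegretMonotoneOn S F) (hF : ConvexOn ℝ S F) {s₀ s₁ : V} (hs₀ : s₀ ∈ S)
    (hs₁ : s₁ ∈ S) {c : ℝ} (hc : c ∈ Ioo 0 1) :
    DifferentiableAt ℝ (fun t : ℝ => F (lineMap s₀ s₁ t)) c := by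
  set f := fun t : ℝ => F (lineMap s₀ s₁ t)
  have hf : ConvexOn ℝ (Icc 0 1) f :=
    (hF.comp_affineMap (lineMap s₀ s₁)).subset (hF.1.mapsTo_lineMap hs₀ hs₁) (convex_Icc 0 1)
  have hint : interior (Icc (0:ℝ) 1) = Ioo 0 1 := interior_Icc
  have hd : ∀ a ∈ Ioo (0:ℝ) 1, DifferentiableWithinAt ℝ f (Ioi a) a := fun a ha =>
    hf.differentiableWithinAt_Ioi_of_mem_interior (hint ▸ ha)
  have hseg : ∀ a ∈ Ioo (0:ℝ) 1, lineMap s₀ s₁ a ∈ S := fun a ha =>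
    hF.1.lineMap_mem hs₀ hs₁ (Ioo_subset_Icc_self ha)
  obtain ⟨t, hct, ht₁⟩ := exists_between hc.2
  have ht : t ∈ Ioo (0:ℝ) 1 := ⟨hc.1.trans hct, ht₁⟩
  refine (hf.hasDerivAt_of_rightRegret_le (hint ▸ hc) (hint ▸ ht) hc.1 hct ?_).differentiableAt
  filter_upwards [Ioo_mem_nhdsLT one_pos] with r hr
  have hΦ : MapsTo (homothety s₀ r) S S := fun x hx => by
    rw [homothety_eq_lineMap]
    exact hF.1.lineMap_mem hs₀ hx (Ioo_subset_Icc_self hr)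
  have hrc : r * c ∈ Ioo (0:ℝ) 1 :=
    ⟨mul_pos hr.1 hc.1, (mul_lt_of_lt_one_left hc.1 hr.2).trans hc.2⟩
  have hreg := hmono _ hΦ _ (hseg t ht) _ (hseg c hc)
  rwa [homothety_lineMap, homothety_lineMap,
    regret_lineMap F s₀ s₁ (mul_le_mul_of_nonneg_left hct.le hr.1.le) (hd _ hrc),
    regret_lineMap F s₀ s₁ hct.le (hd c hc)] at hreg

theorem differentiableAt_add_smul_of_lineMap {S : Set V} {F : V → ℝ}
    (h : ∀ s₀ ∈ S, ∀ s₁ ∈ S, ∀ c ∈ Ioo (0:ℝ) 1,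
      DifferentiableAt ℝ (fun t : ℝ => F (lineMap s₀ s₁ t)) c)
    {x : V} (hx : S ∈ 𝓝 x) (v : V) : DifferentiableAt ℝ (fun u : ℝ => F (x + u • v)) 0 := by
  have hline : Tendsto (fun u : ℝ => x + u • v) (𝓝 0) (𝓝 x) :=
    (continuous_const.add (continuous_id.smul continuous_const)).tendsto' 0 x (by simp)
  obtain ⟨δ, hδ, hball⟩ := Metric.eventually_nhds_iff.1 (hline.eventually hx)
  have hmem : ∀ u : ℝ, |u| < δ → x + u • v ∈ S := fun u hu => hball (by simpa using hu)
  have hreparam : (fun u : ℝ => F (x + u • v)) =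
      fun u => F (lineMap (x + (-(δ / 2)) • v) (x + (δ / 2) • v) (1 / 2 + u / δ)) := by
    funext u
    congr 1
    rw [lineMap_apply_module']
    match_scalars
    · ring
    · field_simp
      ring
  rw [hreparam]
  exact (h _ (hmem _ (by rw [abs_neg, abs_of_pos (half_pos hδ)]; linarith)) _
    (hmem _ (by rw [abs_of_pos (half_pos hδ)]; linarith)) _ (by norm_num)).comp 0 (by fun_prop)

namespace ConvexOn

variable {ι : Type*} [Fintype ι] (b : Module.Basis ι ℝ V) {T : Set V} {φ : V → ℝ}

/-- Jensen's inequality for `v = ∑ (card ι + 1)⁻¹ • (card ι + 1) • vᵢ • bᵢ`, with the leftover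
weight `(card ι + 1)⁻¹` put on `0` so that no case distinction on `card ι = 0` is needed. -/
theorem le_sum_smul_basis (hφ : ConvexOn ℝ T φ) (hT : 0 ∈ T) (h0 : φ 0 = 0) (v : V)
    (hv : ∀ i, ((Fintype.card ι + 1 : ℝ) * b.repr v i) • b i ∈ T) :
    φ v ≤ (Fintype.card ι + 1 : ℝ)⁻¹ *
      ∑ i, φ (((Fintype.card ι + 1 : ℝ) * b.repr v i) • b i) := by
  set N : ℝ := Fintype.card ι + 1
  have hN : 0 < N := by positivity
  let p : Option ι → V := fun o => o.elim 0 fun i => (N * b.repr v i) • b i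
  have hJensen := hφ.map_sum_le (t := Finset.univ) (w := fun _ => N⁻¹) (p := p)
    (fun _ _ => inv_nonneg.2 hN.le) (by simp [N, Fintype.card_option]; field_simp)
    (fun o _ => by cases o <;> simp [p, hT, hv])
  simpa [p, Fintype.sum_option, h0, smul_smul, hN.ne', Finset.mul_sum, b.sum_repr] using hJensen

theorem isLittleO_of_isLittleO_basis [FiniteDimensional ℝ V] (hφ : ConvexOn ℝ T φ)
    (hT : T ∈ 𝓝 0) (h0 : φ 0 = 0) (hb : ∀ i, (fun u : ℝ => φ (u • b i)) =o[𝓝 0] fun u => u) :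
    φ =o[𝓝 0] fun v => v := by
  set N : ℝ := Fintype.card ι + 1
  set ψ : V → ℝ := fun v => N⁻¹ * ∑ i, φ ((N * b.repr v i) • b i)
  have hcoord : ∀ i, (fun v => N * b.repr v i) =O[𝓝 0] fun v => v := fun i =>
    ((LinearMap.toContinuousLinearMap (b.coord i)).isBigO_id _).const_mul_left N
  have hcoord_tendsto : ∀ i, Tendsto (fun v => N * b.repr v i) (𝓝 0) (𝓝 0) := fun i =>
    (hcoord i).trans_tendsto tendsto_id
  have hψ : ψ =o[𝓝 0] fun v => v :=
    (IsLittleO.fun_sum fun i _ => ((hb i).comp_tendsto (hcoord_tendsto i)).trans_isBigO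
      (hcoord i)).const_mul_left N⁻¹
  have hneg : Tendsto (fun v : V => -v) (𝓝 0) (𝓝 0) := by
    simpa using (continuous_neg (G := V)).tendsto 0
  have hψ_neg : (fun v => ψ (-v)) =o[𝓝 0] fun v => v :=
    isLittleO_neg_right.1 (hψ.comp_tendsto hneg)
  have hupper : ∀ᶠ v in 𝓝 0, φ v ≤ ψ v := by
    have hmem : ∀ i, ∀ᶠ v in 𝓝 0, (N * b.repr v i) • b i ∈ T := fun i =>
      ((hcoord_tendsto i).smul_const (b i)).eventually (by simpa using hT)
    filter_upwards [eventually_all.2 hmem] with v hv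
    exact hφ.le_sum_smul_basis b (mem_of_mem_nhds hT) h0 v hv
  have hlower : ∀ᶠ v in 𝓝 0, -ψ (-v) ≤ φ v := by
    filter_upwards [hT, hneg.eventually hT, hneg.eventually hupper] with v hv hnv hupper_neg
    have hmid := hφ.2 hv hnv (by norm_num : (0:ℝ) ≤ 1 / 2) (by norm_num : (0:ℝ) ≤ 1 / 2)
      (by norm_num)
    simp only [smul_neg, add_neg_cancel, h0, smul_eq_mul] at hmid
    linarith
  refine IsBigO.trans_isLittleO (IsBigO.of_bound' ?_) (hψ.norm_left.add hψ_neg.norm_left)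
  filter_upwards [hupper, hlower] with v hup hlow
  rw [Real.norm_of_nonneg (by positivity : 0 ≤ ‖ψ v‖ + ‖ψ (-v)‖), Real.norm_eq_abs, abs_le]
  constructor <;> linarith [Real.le_norm_self (ψ v), Real.le_norm_self (ψ (-v)),
    norm_nonneg (ψ v), norm_nonneg (ψ (-v))]

theorem hasFDerivAt_of_hasDerivAt_basis [FiniteDimensional ℝ V] {S : Set V} {F : V → ℝ}
    (hF : ConvexOn ℝ S F) {x : V} (hx : S ∈ 𝓝 x) {g : ι → ℝ}
    (hg : ∀ i, HasDerivAt (fun u : ℝ => F (x + u • b i)) (g i) 0) :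
    HasFDerivAt F (LinearMap.toContinuousLinearMap (b.constr ℝ g)) x := by
  set L := LinearMap.toContinuousLinearMap (b.constr ℝ g)
  rw [hasFDerivAt_iff_isLittleO_nhds_zero]
  have hT : (fun h => x + h) ⁻¹' S ∈ 𝓝 0 :=
    (continuous_const_add x).tendsto' 0 x (add_zero x) hx
  have hconv : ConvexOn ℝ ((fun h => x + h) ⁻¹' S) (fun h => F (x + h) - F x - L h) :=
    ((hF.translate_right x).add_const (-F x)).sub
      (L.toLinearMap.concaveOn (hF.1.translate_preimage_right x))
  refine hconv.isLittleO_of_isLittleO_basis b hT (by simp) fun i => ?_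
  simpa [L, mul_comm, -Module.Basis.constr_apply_fintype] using
    hasDerivAt_iff_isLittleO_nhds_zero.1 (hg i)

theorem differentiableAt_of_differentiableAt_add_smul [FiniteDimensional ℝ V] {S : Set V}
    {F : V → ℝ} (hF : ConvexOn ℝ S F) {x : V} (hx : S ∈ 𝓝 x)
    (h : ∀ v, DifferentiableAt ℝ (fun u : ℝ => F (x + u • v)) 0) : DifferentiableAt ℝ F x :=
  (hF.hasFDerivAt_of_hasDerivAt_basis (Module.finBasis ℝ V) hx fun _ =>
    (h _).hasDerivAt).differentiableAt

end ConvexOn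

end

theorem monotone_regret_implies_differentiable_general {V : Type*} [NormedAddCommGroup V]
    [NormedSpace ℝ V] [FiniteDimensional ℝ V]
    (S : Set V) (F : V → ℝ) (hF : ConvexOn ℝ S F)
    (hmono : ∀ Φ : V →ᵃ[ℝ] V, Set.MapsTo Φ S S → ∀ s₁ ∈ S, ∀ s₀ ∈ S,
      F ((1 - (1:ℝ)) • (Φ s₀) + (1:ℝ) • (Φ s₁))
          - F ((1 - (0:ℝ)) • (Φ s₀) + (0:ℝ) • (Φ s₁))
          - derivWithin (fun t : ℝ => F ((1 - t) • (Φ s₀) + t • (Φ s₁))) (Set.Icc 0 1) 0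
        ≤ F ((1 - (1:ℝ)) • s₀ + (1:ℝ) • s₁)
          - F ((1 - (0:ℝ)) • s₀ + (0:ℝ) • s₁)
          - derivWithin (fun t : ℝ => F ((1 - t) • s₀ + t • s₁)) (Set.Icc 0 1) 0) :
    (∀ s₀ ∈ S, ∀ s₁ ∈ S, ∀ t ∈ Set.Ioo (0:ℝ) 1,
        DifferentiableAt ℝ (fun t : ℝ => F ((1 - t) • s₀ + t • s₁)) t) ∧
      DifferentiableOn ℝ F (interior S) := by
  have hmono' : RegretMonotoneOn S F := hmono
  have hsegment : ∀ s₀ ∈ S, ∀ s₁ ∈ S, ∀ c ∈ Ioo (0:ℝ) 1,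
      DifferentiableAt ℝ (fun t : ℝ => F (lineMap s₀ s₁ t)) c :=
    fun s₀ hs₀ s₁ hs₁ c hc => hmono'.differentiableAt_lineMap hF hs₀ hs₁ hc
  refine ⟨fun s₀ hs₀ s₁ hs₁ t ht => ?_, fun x hx => ?_⟩
  · simpa only [lineMap_apply_module] using hsegment s₀ hs₀ s₁ hs₁ t ht
  · have hx : S ∈ 𝓝 x := mem_interior_iff_mem_nhds.1 hx
    exact (hF.differentiableAt_of_differentiableAt_add_smul hx
      (differentiableAt_add_smul_of_lineMap hsegment hx)).differentiableWithinAt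

/-- If the regret of `F` (defined along segments via right derivatives) is monotone
under all affine self-maps of the state space, then `F` is differentiable: along every
segment the restriction is differentiable on `(0,1)`, and `F` is differentiable on the
interior of the state space. -/
theorem monotone_regret_implies_differentiable {V : Type*} [NormedAddCommGroup V]
    [NormedSpace ℝ V] [FiniteDimensional ℝ V]
    (S : Set V) (hS : Convex ℝ S) (F : V → ℝ) (hF : ConvexOn ℝ S F)
    (hcont : ContinuousOn F S)
    (hmono : ∀ Φ : V →ᵃ[ℝ] V, Set.MapsTo Φ S S → ∀ s₁ ∈ S, ∀ s₀ ∈ S,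
      F ((1 - (1:ℝ)) • (Φ s₀) + (1:ℝ) • (Φ s₁))
          - F ((1 - (0:ℝ)) • (Φ s₀) + (0:ℝ) • (Φ s₁))
          - derivWithin (fun t : ℝ => F ((1 - t) • (Φ s₀) + t • (Φ s₁))) (Set.Icc 0 1) 0
        ≤ F ((1 - (1:ℝ)) • s₀ + (1:ℝ) • s₁)
          - F ((1 - (0:ℝ)) • s₀ + (0:ℝ) • s₁)
          - derivWithin (fun t : ℝ => F ((1 - t) • s₀ + t • s₁)) (Set.Icc 0 1) 0) :
    (∀ s₀ ∈ S, ∀ s₁ ∈ S, ∀ t ∈ Set.Ioo (0:ℝ) 1,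
        DifferentiableAt ℝ (fun t : ℝ => F ((1 - t) • s₀ + t • s₁)) t) ∧
      DifferentiableOn ℝ F (interior S) :=
  monotone_regret_implies_differentiable_general S F hF hmono
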